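/- arXiv:2207.07083 — 2 statements merged into one kernel-verified Lean document; each statement's English description precedes it below -/
import Mathlib

section
/- The symmetrization map ψ : Sym(g) → U(g), defined on a product of Lie algebra elements by ψ(y₁ ⊙ … ⊙ y_m) = (1/m!) Σ_{σ ∈ S_m} ι y_{σ(1)} ⋯ ι y_{σ(m)}, is a morphism of coalgebras: (ψ ⊗ ψ) ∘ Δ_Sym = Δ_U ∘ ψ, where Δ_Sym and Δ_U are the standard comultiplications on the symmetric algebra and the universal enveloping algebra. -/
/-!
In characteristic zero the symmetric algebra is spanned by the powers `y ^ n`, `y ∈ g`: by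
polarization, `n! y₁ ⋯ yₙ` is an alternating sum of `n`-th powers of partial sums of the `yᵢ`.
So it suffices to compare both (linear) sides on `y ^ n`. There `ψ (y ^ n) = (ι y) ^ n`, and since
`y ⊗ 1` and `1 ⊗ y` commute, the binomial theorem turns both sides into
`∑ (n choose i) (ι y) ^ i ⊗ (ι y) ^ (n - i)`.
-/

open UniversalEnvelopingAlgebra TensorProduct

section Polarization

open Finset

theorem Fintype.sum_surjective_prod_comp {ι R : Type*} [Fintype ι] [DecidableEq ι]
    [CommSemiring R] (x : ι → R) :
    ∑ u ∈ univ.filter (fun u : ι → ι => Function.Surjective u), ∏ j, x (u j)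
      = (Fintype.card ι).factorial • ∏ i, x i := by
  have hperm : univ.map ⟨fun σ : Equiv.Perm ι => ⇑σ, DFunLike.coe_injective⟩
      = univ.filter fun u : ι → ι => Function.Surjective u := by
    ext u
    simp only [mem_map, mem_univ, true_and, Function.Embedding.coeFn_mk, mem_filter]
    exact ⟨by rintro ⟨σ, rfl⟩; exact σ.surjective,
      fun hu => ⟨Equiv.ofBijective u (Finite.surjective_iff_bijective.1 hu), rfl⟩⟩
  rw [← hperm, sum_map]
  simp [Equiv.prod_comp, Fintype.card_perm]

theorem Fintype.factorial_card_nsmul_prod_eq_sum_zsmul_pow {ι R : Type*} [Fintype ι]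
    [DecidableEq ι] [CommRing R] (x : ι → R) :
    (Fintype.card ι).factorial • ∏ i, x i
      = ∑ t : Finset ι, (-1 : ℤ) ^ #t • (∑ i ∈ tᶜ, x i) ^ Fintype.card ι := by
  -- Inclusion-exclusion over the set `t` of values missed by `u : ι → ι` isolates the surjective
  -- `u`, while the `u` missing `t` expand `(∑ i ∈ tᶜ, x i) ^ card ι`.
  have h := inclusion_exclusion_sum_inf_compl (univ : Finset ι)
    (fun i => univ.filter fun u : ι → ι => ∀ j, u j ≠ i) (fun u => ∏ j, x (u j))
  have hsurj : (univ.inf fun i => (univ.filter fun u : ι → ι => ∀ j, u j ≠ i)ᶜ)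
      = univ.filter fun u => Function.Surjective u := by
    ext u
    simp only [mem_inf, mem_compl, mem_filter, mem_univ, true_and, not_forall, not_not,
      forall_const]
    rfl
  have hmiss : ∀ t : Finset ι, t.inf (fun i => univ.filter fun u : ι → ι => ∀ j, u j ≠ i)
      = Fintype.piFinset fun _ => tᶜ := by
    intro t
    ext u
    simp only [mem_inf, mem_filter, mem_univ, true_and, Fintype.mem_piFinset, mem_compl]
    exact ⟨fun h j hj => h _ hj j rfl, fun h i hi j hj => h j (hj ▸ hi)⟩
  simp only [hsurj, hmiss, ← prod_univ_sum, prod_const, card_univ, powerset_univ] at h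
  rw [← h, Fintype.sum_surjective_prod_comp]

end Polarization

section SpanPow

variable {k V S : Type*} [Field k] [CharZero k] [AddCommMonoid V] [Module k V] [CommRing S]
  [Algebra k S] (f : V →ₗ[k] S)

theorem LinearMap.prod_mem_span_pow {ι : Type*} [Fintype ι] (y : ι → V) :
    ∏ i, f (y i) ∈ Submodule.span k {a | ∃ (n : ℕ) (z : V), a = f z ^ n} := by
  classical
  have hfac : ((Fintype.card ι).factorial : k) ≠ 0 := by exact_mod_cast Nat.factorial_ne_zero _
  have hsum : (Fintype.card ι).factorial • ∏ i, f (y i)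
      ∈ Submodule.span k {a | ∃ (n : ℕ) (z : V), a = f z ^ n} := by
    rw [Fintype.factorial_card_nsmul_prod_eq_sum_zsmul_pow]
    refine Submodule.sum_mem _ fun t _ => zsmul_mem (Submodule.subset_span ?_) _
    exact ⟨_, ∑ i ∈ tᶜ, y i, by rw [map_sum]⟩
  rw [← Nat.cast_smul_eq_nsmul k] at hsum
  simpa [smul_smul, inv_mul_cancel₀ hfac] using
    Submodule.smul_mem _ ((Fintype.card ι).factorial : k)⁻¹ hsum

theorem LinearMap.span_pow_eq_top_of_span_prod_eq_top
    (hspan : Submodule.span k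
      {a : S | ∃ (m : ℕ) (y : Fin m → V), a = (List.ofFn fun i => f (y i)).prod} = ⊤) :
    Submodule.span k {a | ∃ (n : ℕ) (z : V), a = f z ^ n} = ⊤ := by
  refine top_le_iff.1 (hspan ▸ Submodule.span_le.2 ?_)
  rintro _ ⟨m, y, rfl⟩
  rw [List.prod_ofFn]
  exact f.prod_mem_span_pow y

end SpanPow

open Finset in
theorem Algebra.TensorProduct.tmul_one_add_one_tmul_pow {R A B : Type*} [CommSemiring R]
    [Semiring A] [Algebra R A] [Semiring B] [Algebra R B] (a : A) (b : B) (n : ℕ) :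
    (a ⊗ₜ[R] (1 : B) + (1 : A) ⊗ₜ[R] b) ^ n
      = ∑ p ∈ antidiagonal n, n.choose p.1 • ((a ^ p.1) ⊗ₜ[R] (b ^ p.2)) := by
  have hc : Commute (a ⊗ₜ[R] (1 : B)) ((1 : A) ⊗ₜ[R] b) := by
    simp [Commute, SemiconjBy, tmul_mul_tmul]
  simp [hc.add_pow', tmul_pow, tmul_mul_tmul]

theorem TensorProduct.map_tmul_one_add_one_tmul_pow {R A B C D : Type*} [CommSemiring R]
    [Semiring A] [Algebra R A] [Semiring B] [Algebra R B]
    [Semiring C] [Algebra R C] [Semiring D] [Algebra R D]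
    (f : A →ₗ[R] C) (h : B →ₗ[R] D) {a : A} {b : B} {c : C} {d : D}
    (hf : ∀ n, f (a ^ n) = c ^ n) (hh : ∀ n, h (b ^ n) = d ^ n) (n : ℕ) :
    map f h ((a ⊗ₜ[R] (1 : B) + (1 : A) ⊗ₜ[R] b) ^ n)
      = (c ⊗ₜ[R] (1 : D) + (1 : C) ⊗ₜ[R] d) ^ n := by
  simp only [Algebra.TensorProduct.tmul_one_add_one_tmul_pow, map_sum, map_nsmul, map_tmul, hf, hh]

/-- The symmetrization map `ψ : Sym(g) → U(g)`, defined on products of Lie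
algebra generators by `ψ (y₁ ⊙ ⋯ ⊙ y_m) = (1/m!) ∑_{σ ∈ S_m} ι y_{σ(1)} ⋯ ι y_{σ(m)}`,
is a morphism of coalgebras: `(ψ ⊗ ψ) ∘ Δ_Sym = Δ_U ∘ ψ`.  Here the symmetric
algebra is modelled by a commutative algebra `S` generated by the image of a
linear map `ιS : g → S`, with comultiplication `ΔS` determined by
`ΔS (ιS y) = ιS y ⊗ 1 + 1 ⊗ ιS y`, and `Δ_U` is the standard comultiplication
of `U(g)`. -/
theorem symmetrization_coalgebra_morphism (k : Type*) [Field k] [CharZero k]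
    (g : Type*) [LieRing g] [LieAlgebra k g]
    (S : Type*) [CommRing S] [Algebra k S]
    (ιS : g →ₗ[k] S)
    -- products of generators span the symmetric algebra
    (hspan : Submodule.span k
      {a : S | ∃ (m : ℕ) (y : Fin m → g), a = (List.ofFn fun i => ιS (y i)).prod} = ⊤)
    (ΔS : S →ₐ[k] S ⊗[k] S)
    (hΔS : ∀ y : g, ΔS (ιS y) = ιS y ⊗ₜ[k] 1 + 1 ⊗ₜ[k] ιS y)
    (ΔU : UniversalEnvelopingAlgebra k g →ₐ[k]
      (UniversalEnvelopingAlgebra k g ⊗[k] UniversalEnvelopingAlgebra k g))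
    (hΔU : ∀ y : g, ΔU (ι k y) = ι k y ⊗ₜ[k] 1 + 1 ⊗ₜ[k] ι k y)
    (ψ : S →ₗ[k] UniversalEnvelopingAlgebra k g)
    (hψ : ∀ (m : ℕ) (y : Fin m → g),
      ψ (List.ofFn fun i => ιS (y i)).prod =
        (m.factorial : k)⁻¹ •
          ∑ σ : Equiv.Perm (Fin m), (List.ofFn fun i => ι k (y (σ i))).prod) :
    (TensorProduct.map ψ ψ) ∘ₗ ΔS.toLinearMap = ΔU.toLinearMap ∘ₗ ψ := by
  have hψ_pow (z : g) (n : ℕ) : ψ (ιS z ^ n) = ι k z ^ n := by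
    have hfac : (n.factorial : k) ≠ 0 := by exact_mod_cast n.factorial_ne_zero
    simpa [List.prod_replicate, Fintype.card_perm, ← Nat.cast_smul_eq_nsmul k, smul_smul,
      inv_mul_cancel₀ hfac] using hψ n fun _ => z
  refine LinearMap.ext_on (ιS.span_pow_eq_top_of_span_prod_eq_top hspan) ?_
  rintro _ ⟨n, z, rfl⟩
  simp only [LinearMap.comp_apply, AlgHom.toLinearMap_apply, map_pow, hΔS, hψ_pow, hΔU]
  exact map_tmul_one_add_one_tmul_pow ψ ψ (hψ_pow z) (hψ_pow z) n
end

section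
/- For a finite-dimensional Lie algebra g over a field of characteristic zero with ordered basis x₁ < … < x_n, and for any admissible index sequence A = {α₁ ≤ … ≤ α_m} and permutation σ ∈ S_m, the product z_{α_{σ(1)}} ⋯ z_{α_{σ(m)}} in U(g) (with z_α = ι x_α) equals z_{α₁} ⋯ z_{α_m} plus a linear combination of products of fewer than m generators; i.e., their difference lies in the span of the images of tensors of degree < m under the canonical map T(g) → U(g). -/
/-!
Adjacent transpositions generate all reorderings of a word in the generators, and swapping two
adjacent letters `x y` changes the product by `ι x ι y - ι y ι x = ι ⁅x, y⁆`, which merges two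
letters into one. Hence every reordering of a word of length `m` changes its product only by an
element of the span of products of fewer than `m` generators.
-/

open UniversalEnvelopingAlgebra

/-- The span of products of fewer than `m` generators `ι x` in `U(g)`: the
image of the tensors of degree `< m` under the canonical map `T(g) → U(g)`. -/
def lengthFiltration (k : Type*) [Field k] (g : Type*) [LieRing g] [LieAlgebra k g]
    (m : ℕ) : Submodule k (UniversalEnvelopingAlgebra k g) :=
  Submodule.span k
    {u | ∃ l : List g, l.length < m ∧ u = (l.map fun y => (ι k y : UniversalEnvelopingAlgebra k g)).prod}

namespace UniversalEnvelopingAlgebra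

variable {k : Type*} [Field k] {g : Type*} [LieRing g] [LieAlgebra k g]

theorem ι_mul_ι_sub_ι_mul_ι (x y : g) :
    (ι k x * ι k y - ι k y * ι k x : UniversalEnvelopingAlgebra k g) = ι k ⁅x, y⁆ := by
  let _ := LieRing.ofAssociativeRing (A := UniversalEnvelopingAlgebra k g)
  rw [LieHom.map_lie, Ring.lie_def]

theorem prod_map_ι_mem_lengthFiltration {m : ℕ} (l : List g) (h : l.length < m) :
    (l.map fun y => (ι k y : UniversalEnvelopingAlgebra k g)).prod ∈ lengthFiltration k g m :=
  Submodule.subset_span ⟨l, h, rfl⟩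

theorem ι_mul_mem_lengthFiltration_succ {m : ℕ} (x : g) {u : UniversalEnvelopingAlgebra k g}
    (hu : u ∈ lengthFiltration k g m) : ι k x * u ∈ lengthFiltration k g (m + 1) := by
  induction hu using Submodule.span_induction with
  | mem u hu =>
    obtain ⟨l, hl, rfl⟩ := hu
    exact Submodule.subset_span ⟨x :: l, by simpa using hl, by simp⟩
  | zero => simp
  | add u v _ _ hu hv => rw [mul_add]; exact add_mem hu hv
  | smul c u _ hu => rw [mul_smul_comm]; exact Submodule.smul_mem _ c hu

theorem prod_map_ι_sub_mem_lengthFiltration_of_perm {l l' : List g} (h : l.Perm l') :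
    (l'.map fun y => (ι k y : UniversalEnvelopingAlgebra k g)).prod -
      (l.map fun y => (ι k y : UniversalEnvelopingAlgebra k g)).prod ∈
      lengthFiltration k g l.length := by
  induction h with
  | nil => simp
  | cons x _ ih =>
    simp only [List.map_cons, List.prod_cons, List.length_cons, ← mul_sub]
    exact ι_mul_mem_lengthFiltration_succ x ih
  | swap x y l =>
    simp only [List.map_cons, List.prod_cons, List.length_cons, ← mul_assoc, ← sub_mul,
      ι_mul_ι_sub_ι_mul_ι]
    exact prod_map_ι_mem_lengthFiltration (⁅x, y⁆ :: l) (by simp)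
  | trans h₁₂ _ ih₁₂ ih₂₃ =>
    rw [← sub_add_sub_cancel']
    exact add_mem ih₁₂ (h₁₂.length_eq ▸ ih₂₃)

end UniversalEnvelopingAlgebra

theorem pbw_triangularity_general (k : Type*) [Field k]
    (g : Type*) [LieRing g] [LieAlgebra k g]
    (n : ℕ) (b : Module.Basis (Fin n) k g)
    (m : ℕ) (α : Fin m → Fin n)
    (σ : Equiv.Perm (Fin m)) :
    (List.ofFn fun i => (ι k (b (α (σ i))) : UniversalEnvelopingAlgebra k g)).prod -
        (List.ofFn fun i => (ι k (b (α i)) : UniversalEnvelopingAlgebra k g)).prod ∈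
      lengthFiltration k g m := by
  have hperm : (List.ofFn fun i => b (α i)).Perm (List.ofFn fun i => b (α (σ i))) :=
    (σ.ofFn_comp_perm fun i => b (α i)).symm
  simpa [List.map_ofFn, Function.comp_def] using prod_map_ι_sub_mem_lengthFiltration_of_perm hperm

/-- For a finite-dimensional Lie algebra over a field of characteristic zero
with an ordered basis, for any admissible (weakly increasing) index sequence
`α : Fin m → Fin n` and any permutation `σ ∈ S_m`, the product
`z_{α(σ 1)} ⋯ z_{α(σ m)}` equals `z_{α 1} ⋯ z_{α m}` modulo a linear
combination of products of fewer than `m` generators. -/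
theorem pbw_triangularity (k : Type*) [Field k] [CharZero k]
    (g : Type*) [LieRing g] [LieAlgebra k g] [FiniteDimensional k g]
    (n : ℕ) (b : Module.Basis (Fin n) k g)
    (m : ℕ) (α : Fin m → Fin n) (hα : Monotone α)
    (σ : Equiv.Perm (Fin m)) :
    (List.ofFn fun i => (ι k (b (α (σ i))) : UniversalEnvelopingAlgebra k g)).prod -
        (List.ofFn fun i => (ι k (b (α i)) : UniversalEnvelopingAlgebra k g)).prod ∈
      lengthFiltration k g m :=
  pbw_triangularity_general k g n b m α σ
end
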